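/- For a monotone derivative computation: for x_0 in the cylinder of rank m with base c_1...c_m, the increment of f over the cylinder equals μ_f = Σ_{k≥1}(q_{m+k}−1)/q^{m+k}, while the cylinder length is 1/(q_1⋯q_m); hence the ratio μ_f/|Δ| equals (q_1⋯q_m/q^m)·Σ_{n≥m+1}(q_n−1)/q^{n−m}, and this ratio lies between (1/(q−1))·(q_1⋯q_m/q^m) and q_1⋯q_m/q^m. -/

import Mathlib

/-!
The two endpoints of the cylinder share the digits `c_1 … c_m`, and their tails carry the
digit `q_n - 1` at alternate places, out of phase.  In the difference of their nega-`q` values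
the alternation of the digits cancels the alternation of the signs of `(-q)^n`, so every term
is `(q_n - 1) / q^n` up to the common sign `(-1)^m`.  Dividing by `|Δ| = 1/(q_1⋯q_m)` and
comparing `1 ≤ q_n - 1 ≤ q - 1` with the geometric series `Σ_{k ≥ 1} q^{-k} = 1/(q - 1)` gives
the bounds.
-/

/-- The nega-q value `Σ_{k≥1} ε_k/(−q)^k` of a digit sequence. -/
noncomputable def negVal (q0 : ℕ) (e : ℕ → ℕ) : ℝ :=
  ∑' k : ℕ, (e k : ℝ) / (-(q0 : ℝ)) ^ (k + 1)

open Finset Set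

theorem summable_div_pow_succ_of_abs_le {x C : ℝ} (hx : 1 < |x|) {e : ℕ → ℝ}
    (he : ∀ n, |e n| ≤ C) : Summable fun n => e n / x ^ (n + 1) := by
  have hx0 : 0 < |x| := one_pos.trans hx
  refine Summable.of_norm_bounded ((summable_geometric_of_lt_one (inv_nonneg.2 hx0.le)
    (inv_lt_one_of_one_lt₀ hx)).mul_left (C / |x|)) fun n => ?_
  calc ‖e n / x ^ (n + 1)‖ = |e n| / |x| ^ (n + 1) := by
        rw [norm_div, norm_pow, Real.norm_eq_abs, Real.norm_eq_abs]
    _ ≤ C / |x| ^ (n + 1) := by gcongr; exact he n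
    _ = C / |x| * |x|⁻¹ ^ n := by rw [pow_succ, inv_pow]; field_simp

theorem tsum_one_div_pow_succ {Q : ℝ} (hQ : 1 < Q) : ∑' k : ℕ, 1 / Q ^ (k + 1) = 1 / (Q - 1) := by
  have hQ0 : 0 < Q := one_pos.trans hQ
  have hterm (k : ℕ) : 1 / Q ^ (k + 1) = Q⁻¹ ^ k / Q := by rw [pow_succ, inv_pow]; field_simp
  rw [tsum_congr hterm, tsum_div_const,
    tsum_geometric_of_lt_one (inv_nonneg.2 hQ0.le) (inv_lt_one_of_one_lt₀ hQ)]
  field_simp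

theorem tsum_div_pow_succ_mem_Icc {Q lo hi : ℝ} (hQ : 1 < Q) {a : ℕ → ℝ}
    (ha : ∀ k, a k ∈ Icc lo hi) :
    ∑' k, a k / Q ^ (k + 1) ∈ Icc (lo / (Q - 1)) (hi / (Q - 1)) := by
  have hQ' : 1 < |Q| := by rwa [abs_of_pos (one_pos.trans hQ)]
  have hsum : Summable fun k => a k / Q ^ (k + 1) :=
    summable_div_pow_succ_of_abs_le hQ' fun k => abs_le_max_abs_abs (ha k).1 (ha k).2
  have hgeom (c : ℝ) : Summable fun k => c * (1 / Q ^ (k + 1)) :=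
    (summable_div_pow_succ_of_abs_le hQ' (C := 1) (by simp)).mul_left c
  have hpow (k : ℕ) : 0 ≤ Q ^ (k + 1) := by positivity
  rw [← mul_one_div lo, ← mul_one_div hi, ← tsum_one_div_pow_succ hQ, ← tsum_mul_left,
    ← tsum_mul_left]
  refine ⟨(hgeom lo).tsum_le_tsum (fun k => ?_) hsum, hsum.tsum_le_tsum (fun k => ?_) (hgeom hi)⟩
  · rw [mul_one_div]; exact div_le_div_of_nonneg_right (ha k).1 (hpow k)
  · rw [mul_one_div]; exact div_le_div_of_nonneg_right (ha k).2 (hpow k)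

theorem neg_one_pow_mul_div_neg_pow (m k : ℕ) (d Q : ℝ) :
    (-1) ^ m * ((-1) ^ (k + 1) * d) / (-Q) ^ (m + k + 1) = d / Q ^ (m + k + 1) := by
  rw [neg_pow Q, ← mul_assoc, ← pow_add, add_assoc,
    mul_div_mul_left _ _ (pow_ne_zero _ (neg_ne_zero.2 one_ne_zero))]

theorem summable_negVal_term {q0 C : ℕ} (hq0 : 1 < q0) {e : ℕ → ℕ} (he : ∀ n, e n ≤ C) :
    Summable fun n => (e n : ℝ) / (-(q0 : ℝ)) ^ (n + 1) :=
  summable_div_pow_succ_of_abs_le (C := C)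
    (by rw [abs_neg, Nat.abs_cast]; exact_mod_cast hq0)
    fun n => by rw [Nat.abs_cast]; exact_mod_cast he n

theorem negVal_sub_negVal {q0 C : ℕ} (hq0 : 1 < q0) {a b : ℕ → ℕ} (ha : ∀ n, a n ≤ C)
    (hb : ∀ n, b n ≤ C) :
    negVal q0 a - negVal q0 b = ∑' n, ((a n : ℝ) - b n) / (-(q0 : ℝ)) ^ (n + 1) := by
  simp_rw [negVal, sub_div]
  exact ((summable_negVal_term hq0 ha).tsum_sub (summable_negVal_term hq0 hb)).symm

theorem neg_one_pow_mul_negVal_sub_negVal {q0 C : ℕ} (hq0 : 1 < q0) {a b : ℕ → ℕ}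
    (ha : ∀ n, a n ≤ C) (hb : ∀ n, b n ≤ C) (m : ℕ) (d : ℕ → ℝ) (hprefix : ∀ n < m, a n = b n)
    (htail : ∀ k, (a (m + k) : ℝ) - b (m + k) = (-1) ^ (k + 1) * d (m + k)) :
    (-1) ^ m * (negVal q0 a - negVal q0 b) = ∑' k, d (m + k) / (q0 : ℝ) ^ (m + k + 1) := by
  have hsum : Summable fun n => (-1) ^ m * (((a n : ℝ) - b n) / (-(q0 : ℝ)) ^ (n + 1)) := by
    simpa only [sub_div] using
      ((summable_negVal_term hq0 ha).sub (summable_negVal_term hq0 hb)).mul_left ((-1 : ℝ) ^ m)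
  rw [negVal_sub_negVal hq0 ha hb, ← tsum_mul_left, ← hsum.sum_add_tsum_nat_add m,
    sum_eq_zero fun n hn => by rw [hprefix n (mem_range.1 hn)]; ring, zero_add]
  refine tsum_congr fun k => ?_
  rw [← mul_div_assoc, add_comm k m, htail, neg_one_pow_mul_div_neg_pow]

theorem ite_mod_two_sub {R : Type*} [Ring R] (m : ℕ) (x y : R) :
    (if m % 2 = 0 then x - y else y - x) = (-1) ^ m * (x - y) := by
  rcases Nat.even_or_odd m with h | h
  · simp [h.neg_one_pow, Nat.even_iff.1 h]
  · simp [h.neg_one_pow, Nat.odd_iff.1 h]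

theorem cast_ite_mod_two_sub {r : ℕ} (hr : 1 ≤ r) (k : ℕ) :
    ((if k % 2 = 0 then 0 else r - 1 : ℕ) : ℝ) - ((if k % 2 = 0 then r - 1 else 0 : ℕ) : ℝ) =
      (-1) ^ (k + 1) * ((r : ℝ) - 1) := by
  rcases Nat.even_or_odd k with h | h
  · simp [Nat.even_iff.1 h, pow_succ, h.neg_one_pow, Nat.cast_sub hr]
  · simp [Nat.odd_iff.1 h, pow_succ, h.neg_one_pow, Nat.cast_sub hr]

theorem tsum_div_pow_add_succ (f : ℕ → ℝ) (Q : ℝ) (m : ℕ) :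
    ∑' k, f k / Q ^ (m + k + 1) = (∑' k, f k / Q ^ (k + 1)) / Q ^ m := by
  rw [← tsum_div_const]
  exact tsum_congr fun k => by rw [add_assoc, pow_add, div_div, mul_comm (Q ^ m)]

/-- for the cylinder of rank `m` with base `c_1 … c_m`, the increment
`μ_f = f(sup Δ) − f(inf Δ)` equals `Σ_{k≥1} (q_{m+k} − 1)/q^{m+k}`, the cylinder length is
`1/(q_1⋯q_m)`, hence `μ_f/|Δ| = (q_1⋯q_m/q^m)·Σ_{n≥m+1} (q_n − 1)/q^{n−m}`, which lies
between `(1/(q−1))·(q_1⋯q_m/q^m)` and `q_1⋯q_m/q^m`.  The endpoints of the cylinder are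
the points with tails `(q_{m+1}−1) 0 (q_{m+3}−1) 0 …` and `0 (q_{m+2}−1) 0 (q_{m+4}−1) …`,
with sup/inf depending on the parity of `m`. -/
theorem stmt16 (q0 : ℕ) (q : ℕ → ℕ) (hq2 : ∀ k, 2 ≤ q k) (hqq : ∀ k, q k ≤ q0)
    (m : ℕ) (c : ℕ → ℕ) (hc : ∀ k, c k < q k) :
    let eA : ℕ → ℕ := fun n => if n < m then c n else if (n - m) % 2 = 0 then q n - 1 else 0
    let eB : ℕ → ℕ := fun n => if n < m then c n else if (n - m) % 2 = 0 then 0 else q n - 1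
    let μ : ℝ := if m % 2 = 0 then negVal q0 eB - negVal q0 eA else negVal q0 eA - negVal q0 eB
    let len : ℝ := 1 / ∏ i ∈ Finset.range m, (q i : ℝ)
    let P : ℝ := (∏ i ∈ Finset.range m, (q i : ℝ)) / (q0 : ℝ) ^ m
    μ = (∑' k : ℕ, ((q (m + k) : ℝ) - 1) / (q0 : ℝ) ^ (m + k + 1)) ∧
      μ / len = P * ∑' k : ℕ, ((q (m + k) : ℝ) - 1) / (q0 : ℝ) ^ (k + 1) ∧
      (1 / ((q0 : ℝ) - 1)) * P ≤ μ / len ∧ μ / len ≤ P := by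
  intro eA eB μ len P
  have hq0 : 1 < q0 := one_lt_two.trans_le ((hq2 0).trans (hqq 0))
  have hQ : (1 : ℝ) < q0 := by exact_mod_cast hq0
  have hdigits (n : ℕ) : eA n ≤ q0 ∧ eB n ≤ q0 := by
    have := hc n; have := hqq n; constructor <;> (simp only [eA, eB]; split_ifs <;> omega)
  have hμ : μ = ∑' k : ℕ, ((q (m + k) : ℝ) - 1) / (q0 : ℝ) ^ (m + k + 1) := by
    rw [← neg_one_pow_mul_negVal_sub_negVal hq0 (fun n => (hdigits n).2) (fun n => (hdigits n).1)
      m (fun n => (q n : ℝ) - 1) (fun n hn => by simp [eA, eB, hn]) fun k => ?_]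
    · exact ite_mod_two_sub m _ _
    · simpa [eA, eB] using cast_ite_mod_two_sub (one_le_two.trans (hq2 (m + k))) k
  set S := ∑' k : ℕ, ((q (m + k) : ℝ) - 1) / (q0 : ℝ) ^ (k + 1)
  have hratio : μ / len = P * S := by
    rw [hμ, tsum_div_pow_add_succ, div_div_eq_mul_div, div_one]
    ring
  have hS : S ∈ Icc (1 / ((q0 : ℝ) - 1)) 1 := by
    have hdigit (k : ℕ) : (q (m + k) : ℝ) - 1 ∈ Icc 1 ((q0 : ℝ) - 1) :=
      ⟨le_sub_iff_add_le.2 (by exact_mod_cast hq2 (m + k)),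
        sub_le_sub_right (by exact_mod_cast hqq (m + k)) 1⟩
    simpa only [div_self (sub_pos.2 hQ).ne'] using tsum_div_pow_succ_mem_Icc hQ hdigit
  have hP : 0 ≤ P := by positivity
  rw [hratio, mul_comm _ P]
  exact ⟨hμ, rfl, mul_le_mul_of_nonneg_left hS.1 hP, mul_le_of_le_one_right hP hS.2⟩
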